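/- arXiv:2105.09039 — 2 statements merged into one kernel-verified Lean document; each statement's English description precedes it below -/
import Mathlib

section
/- Assume f^u(x,0,0) = f^v(x,0,0) = 0 for all x ∈ [0,1]. For every T > 0 there exists a constant C, depending only on l_F, l and T, such that every classical solution (u,v) of the semilinear system on [0,1] × [0,T] satisfies sup_{(x,t) ∈ [0,1]×[0,T]} max(|u(x,t)|, |v(x,t)|) ≤ C · max{ sup_{x ∈ [0,1]} max(|u(x,0)|, |v(x,0)|), sup_{t ∈ [0,T]} |u(0,t)|, sup_{t ∈ [0,T]} |v(1,t)| }. In particular, the supremum norm of a classical solution of the globally Lipschitz semilinear system cannot blow up in finite time. -/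
open Set MeasureTheory intervalIntegral Filter
open Topology

noncomputable section

/-- Regularity, positivity and global Lipschitz assumptions on the data of the
semilinear 2×2 hyperbolic system: speeds `lu, lv` are continuous and bounded below
by `1/l`, and the source terms `fu, fv` are continuous and globally Lipschitz in the
state `(u,v)` (sup norm) with constant `lF`, uniformly in `x`. -/
def SemilinearData (lu lv : ℝ → ℝ) (fu fv : ℝ → ℝ → ℝ → ℝ) (l lF : ℝ) : Prop :=
  0 < l ∧
  ContinuousOn lu (Icc (0:ℝ) 1) ∧ ContinuousOn lv (Icc (0:ℝ) 1) ∧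
  (∀ x ∈ Icc (0:ℝ) 1, 1 / l ≤ lu x) ∧ (∀ x ∈ Icc (0:ℝ) 1, 1 / l ≤ lv x) ∧
  ContinuousOn (fun p : ℝ × ℝ × ℝ => fu p.1 p.2.1 p.2.2)
    (Icc (0:ℝ) 1 ×ˢ (univ : Set (ℝ × ℝ))) ∧
  ContinuousOn (fun p : ℝ × ℝ × ℝ => fv p.1 p.2.1 p.2.2)
    (Icc (0:ℝ) 1 ×ˢ (univ : Set (ℝ × ℝ))) ∧
  (∀ x ∈ Icc (0:ℝ) 1, ∀ a b a' b' : ℝ,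
    |fu x a b - fu x a' b'| ≤ lF * max |a - a'| |b - b'|) ∧
  (∀ x ∈ Icc (0:ℝ) 1, ∀ a b a' b' : ℝ,
    |fv x a b - fv x a' b'| ≤ lF * max |a - a'| |b - b'|)

/-- Classical (C¹) solution of the semilinear system
`u_t = -lu u_x + fu(x,u,v)`, `v_t = lv v_x + fv(x,u,v)` on `[0,1] × I`,
with explicit partial-derivative functions `ux, ut, vx, vt` that are continuous
on the domain. -/
def IsSemilinearSolution (lu lv : ℝ → ℝ) (fu fv : ℝ → ℝ → ℝ → ℝ) (I : Set ℝ)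
    (u v ux ut vx vt : ℝ → ℝ → ℝ) : Prop :=
  (∀ x ∈ Icc (0:ℝ) 1, ∀ t ∈ I,
    HasDerivAt (fun y => u y t) (ux x t) x ∧
    HasDerivAt (fun s => u x s) (ut x t) t ∧
    HasDerivAt (fun y => v y t) (vx x t) x ∧
    HasDerivAt (fun s => v x s) (vt x t) t ∧
    ut x t = -lu x * ux x t + fu x (u x t) (v x t) ∧
    vt x t = lv x * vx x t + fv x (u x t) (v x t)) ∧
  ContinuousOn (fun p : ℝ × ℝ => ux p.1 p.2) (Icc (0:ℝ) 1 ×ˢ I) ∧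
  ContinuousOn (fun p : ℝ × ℝ => ut p.1 p.2) (Icc (0:ℝ) 1 ×ˢ I) ∧
  ContinuousOn (fun p : ℝ × ℝ => vx p.1 p.2) (Icc (0:ℝ) 1 ×ˢ I) ∧
  ContinuousOn (fun p : ℝ × ℝ => vt p.1 p.2) (Icc (0:ℝ) 1 ×ˢ I)


/-- One-sided derivative inequality: if `f` has derivative `d` at `p > 0` and
`f s ≤ f p` for `s` just to the left of `p`, then `0 ≤ d`. -/
lemma deriv_nonneg_left' {f : ℝ → ℝ} {d p : ℝ} (hp : 0 < p) (hd : HasDerivAt f d p)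
    (h : ∀ s ∈ Ico 0 p, f s ≤ f p) : 0 ≤ d := by
  have h1 : HasDerivWithinAt f d (Ico 0 p) p := hd.hasDerivWithinAt
  rw [hasDerivWithinAt_iff_tendsto_slope] at h1
  have hdiff : Ico (0:ℝ) p \ {p} = Ico 0 p := by
    apply diff_singleton_eq_self; simp
  rw [hdiff] at h1
  have hne : (𝓝[Ico (0:ℝ) p] p).NeBot := by
    rw [← mem_closure_iff_nhdsWithin_neBot, closure_Ico hp.ne]
    exact ⟨hp.le, le_refl p⟩
  refine ge_of_tendsto h1 ?_
  filter_upwards [self_mem_nhdsWithin] with s hs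
  have h2 : f s - f p ≤ 0 := sub_nonpos.2 (h s hs)
  have h3 : s - p < 0 := sub_neg.2 hs.2
  rw [slope_def_field]
  exact div_nonneg_of_nonpos h2 h3.le

/-- One-sided derivative inequality: if `f` has derivative `d` at `p < q` and
`f s ≤ f p` for `s` just to the right of `p`, then `d ≤ 0`. -/
lemma deriv_nonpos_right' {f : ℝ → ℝ} {d p q : ℝ} (hpq : p < q) (hd : HasDerivAt f d p)
    (h : ∀ s ∈ Ioc p q, f s ≤ f p) : d ≤ 0 := by
  have h1 : HasDerivWithinAt f d (Ioc p q) p := hd.hasDerivWithinAt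
  rw [hasDerivWithinAt_iff_tendsto_slope] at h1
  have hdiff : Ioc p q \ {p} = Ioc p q := by
    apply diff_singleton_eq_self; simp
  rw [hdiff] at h1
  have hne : (𝓝[Ioc p q] p).NeBot := by
    rw [← mem_closure_iff_nhdsWithin_neBot, closure_Ioc hpq.ne]
    exact ⟨le_refl p, hpq.le⟩
  refine le_of_tendsto h1 ?_
  filter_upwards [self_mem_nhdsWithin] with s hs
  have h2 : f s - f p ≤ 0 := sub_nonpos.2 (h s hs)
  have h3 : 0 < s - p := sub_pos.2 hs.1
  rw [slope_def_field]
  exact div_nonpos_of_nonpos_of_nonneg h2 h3.le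

/-- A function on `[0,1] × [0,T]` whose partial derivatives exist everywhere,
with continuous `x`-partial, is jointly continuous. -/
lemma jointCont' {u ux ut : ℝ → ℝ → ℝ} {T : ℝ}
    (hder : ∀ x ∈ Icc (0:ℝ) 1, ∀ t ∈ Icc (0:ℝ) T,
      HasDerivAt (fun y => u y t) (ux x t) x ∧ HasDerivAt (fun s => u x s) (ut x t) t)
    (hux : ContinuousOn (fun p : ℝ × ℝ => ux p.1 p.2) (Icc (0:ℝ) 1 ×ˢ Icc (0:ℝ) T)) :
    ContinuousOn (fun p : ℝ × ℝ => u p.1 p.2) (Icc (0:ℝ) 1 ×ˢ Icc (0:ℝ) T) := by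
  obtain ⟨K, hK⟩ := (isCompact_Icc.prod isCompact_Icc).exists_bound_of_continuousOn hux
  set K0 : ℝ := max K 0 with hK0def
  have hK0 : ∀ p ∈ Icc (0:ℝ) 1 ×ˢ Icc (0:ℝ) T, |ux p.1 p.2| ≤ K0 :=
    fun p hp => le_trans (hK p hp) (le_max_left _ _)
  rw [Metric.continuousOn_iff]
  rintro ⟨x0, t0⟩ ⟨hx0, ht0⟩ ε hε
  have hct : ContinuousAt (fun s => u x0 s) t0 := (hder x0 hx0 t0 ht0).2.continuousAt
  rw [Metric.continuousAt_iff] at hct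
  obtain ⟨δ1, hδ1pos, hδ1⟩ := hct (ε/2) (by linarith)
  have hK0pos : (0:ℝ) < K0 + 1 := by positivity
  refine ⟨min δ1 (ε/(2*(K0+1))), by positivity, ?_⟩
  rintro ⟨x, t⟩ ⟨hx, ht⟩ hdist
  rw [Prod.dist_eq] at hdist
  simp only at hdist ⊢
  have hdx : dist x x0 < min δ1 (ε/(2*(K0+1))) := lt_of_le_of_lt (le_max_left _ _) hdist
  have hdt : dist t t0 < min δ1 (ε/(2*(K0+1))) := lt_of_le_of_lt (le_max_right _ _) hdist
  have h2 : dist (u x0 t) (u x0 t0) < ε/2 := hδ1 (lt_of_lt_of_le hdt (min_le_left _ _))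
  have h1 : |u x t - u x0 t| ≤ K0 * |x - x0| := by
    have := Convex.norm_image_sub_le_of_norm_hasDerivWithin_le
      (f := fun y => u y t) (f' := fun y => ux y t) (s := Icc (0:ℝ) 1) (C := K0)
      (fun y hy => ((hder y hy t ht).1).hasDerivWithinAt)
      (fun y hy => hK0 (y, t) ⟨hy, ht⟩) (convex_Icc 0 1) hx0 hx
    simpa [Real.norm_eq_abs] using this
  have h1' : |u x t - u x0 t| < ε/2 := by
    calc |u x t - u x0 t| ≤ K0 * |x - x0| := h1
    _ ≤ K0 * (ε/(2*(K0+1))) := by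
        apply mul_le_mul_of_nonneg_left _ (le_max_right K 0)
        rw [← Real.dist_eq]
        exact (lt_of_lt_of_le hdx (min_le_right _ _)).le
    _ < ε/2 := by
        have hD : 0 < ε/(2*(K0+1)) := by positivity
        have heq : (K0+1) * (ε/(2*(K0+1))) = ε/2 := by
          field_simp
        calc K0 * (ε/(2*(K0+1))) < (K0+1) * (ε/(2*(K0+1))) := by nlinarith
        _ = ε/2 := heq
  calc dist (u x t) (u x0 t0) ≤ dist (u x t) (u x0 t) + dist (u x0 t) (u x0 t0) :=
        dist_triangle _ _ _
  _ < ε/2 + ε/2 := by rw [Real.dist_eq]; exact add_lt_add h1' h2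
  _ = ε := by ring

/-- no finite-time blow-up for the globally Lipschitz semilinear
system.  Assuming `f^u(x,0,0) = f^v(x,0,0) = 0`, for every horizon `T > 0` there is a
constant `C`, depending only on `lF`, `l` and `T`, such that every classical solution
on `[0,1] × [0,T]` is bounded by `C` times the largest of: the sup norm of the initial
data, the sup of the inflow boundary data `|u(0,·)|`, and the sup of the inflow
boundary data `|v(1,·)|` (expressed via an arbitrary common upper bound `B`). -/
theorem statement13 (l lF T : ℝ) (hl : 0 < l) (hT : 0 < T) :
    ∃ C : ℝ,
      ∀ (lu lv : ℝ → ℝ) (fu fv : ℝ → ℝ → ℝ → ℝ)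
        (u v ux ut vx vt : ℝ → ℝ → ℝ),
        SemilinearData lu lv fu fv l lF →
        (∀ x ∈ Icc (0:ℝ) 1, fu x 0 0 = 0 ∧ fv x 0 0 = 0) →
        IsSemilinearSolution lu lv fu fv (Icc 0 T) u v ux ut vx vt →
        ∀ B : ℝ,
          (∀ x ∈ Icc (0:ℝ) 1, max |u x 0| |v x 0| ≤ B) →
          (∀ t ∈ Icc (0:ℝ) T, |u 0 t| ≤ B) →
          (∀ t ∈ Icc (0:ℝ) T, |v 1 t| ≤ B) →
          ∀ x ∈ Icc (0:ℝ) 1, ∀ t ∈ Icc (0:ℝ) T,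
            max |u x t| |v x t| ≤ C * B := by
  set k : ℝ := max lF 0 + 1 with hkdef
  have hkpos : 0 < k := by positivity
  have hklF : lF < k := lt_of_le_of_lt (le_max_left lF 0) (lt_add_one _)
  refine ⟨Real.exp (k * T), ?_⟩
  intro lu lv fu fv u v ux ut vx vt hdata hzero hsol B hinit hbu hbv x hx t ht
  obtain ⟨hl0, hclu, hclv, hlu, hlv, hcfu, hcfv, hLu, hLv⟩ := hdata
  obtain ⟨hder, hcux, hcut, hcvx, hcvt⟩ := hsol
  have h01 : (0:ℝ) ∈ Icc (0:ℝ) 1 := ⟨le_refl 0, zero_le_one⟩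
  have h11 : (1:ℝ) ∈ Icc (0:ℝ) 1 := ⟨zero_le_one, le_refl 1⟩
  have hB0 : 0 ≤ B := le_trans (le_trans (abs_nonneg _) (le_max_left _ _)) (hinit 0 h01)
  -- joint continuity of u and v
  have hcu : ContinuousOn (fun p : ℝ × ℝ => u p.1 p.2) (Icc (0:ℝ) 1 ×ˢ Icc (0:ℝ) T) :=
    jointCont' (fun y hy s hs => ⟨(hder y hy s hs).1, (hder y hy s hs).2.1⟩) hcux
  have hcv : ContinuousOn (fun p : ℝ × ℝ => v p.1 p.2) (Icc (0:ℝ) 1 ×ˢ Icc (0:ℝ) T) :=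
    jointCont' (u := v) (ux := vx) (ut := vt)
      (fun y hy s hs => ⟨(hder y hy s hs).2.2.1, (hder y hy s hs).2.2.2.1⟩) hcvx
  have hM : ContinuousOn (fun p : ℝ × ℝ => max |u p.1 p.2| |v p.1 p.2|)
      (Icc (0:ℝ) 1 ×ˢ Icc (0:ℝ) T) := fun p hp => ((hcu p hp).abs).max ((hcv p hp).abs)
  -- key estimate with a margin ε
  have key : ∀ ε > 0, ∀ y ∈ Icc (0:ℝ) 1, ∀ s ∈ Icc (0:ℝ) T,
      max |u y s| |v y s| ≤ (B + ε) * Real.exp (k * s) := by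
    intro ε hε
    by_contra hcon
    push_neg at hcon
    obtain ⟨x1, hx1, t1, ht1, hgt⟩ := hcon
    set φ : ℝ → ℝ := fun s => (B + ε) * Real.exp (k * s) with hφdef
    have hφpos : ∀ s, 0 < φ s := fun s => mul_pos (by linarith) (Real.exp_pos _)
    have hφB : ∀ s, 0 ≤ s → B + ε ≤ φ s := fun s hs =>
      le_mul_of_one_le_right (by linarith) (Real.one_le_exp (mul_nonneg hkpos.le hs))
    have hφcont : Continuous φ :=
      continuous_const.mul (Real.continuous_exp.comp (continuous_const.mul continuous_id))
    set S : Set ℝ :=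
      {s | s ∈ Icc (0:ℝ) T ∧ ∃ y ∈ Icc (0:ℝ) 1, φ s < max |u y s| |v y s|} with hSdef
    have hSne : S.Nonempty := ⟨t1, ht1, x1, hx1, hgt⟩
    have hSbdd : BddBelow S := ⟨0, fun s hs => hs.1.1⟩
    set t' : ℝ := sInf S with ht'def
    have ht'T : t' ∈ Icc (0:ℝ) T := by
      obtain ⟨s0, hs0⟩ := id hSne
      exact ⟨le_csInf hSne (fun s hs => hs.1.1), le_trans (csInf_le hSbdd hs0) hs0.1.2⟩
    have hbelow : ∀ s ∈ Ico (0:ℝ) t', ∀ y ∈ Icc (0:ℝ) 1, max |u y s| |v y s| ≤ φ s := by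
      intro s hs y hy
      by_contra hlt
      push_neg at hlt
      have hmem : s ∈ S := ⟨⟨hs.1, le_trans hs.2.le ht'T.2⟩, y, hy, hlt⟩
      exact absurd (csInf_le hSbdd hmem) (not_le.2 hs.2)
    -- continuity of slices in time
    have hMy : ∀ y ∈ Icc (0:ℝ) 1,
        ContinuousOn (fun s => max |u y s| |v y s|) (Icc (0:ℝ) T) := by
      intro y hy
      have : ContinuousOn ((fun p : ℝ × ℝ => max |u p.1 p.2| |v p.1 p.2|) ∘ (fun s => (y, s)))
          (Icc (0:ℝ) T) :=
        hM.comp ((continuous_const.prodMk continuous_id).continuousOn)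
          (fun s hs => ⟨hy, hs⟩)
      exact this
    -- t' is not in S
    have ht'notS : t' ∉ S := by
      intro hmem
      obtain ⟨ht'icc, y, hy, hlt⟩ := hmem
      have ht'pos : 0 < t' := by
        rcases eq_or_lt_of_le ht'icc.1 with h0 | h0
        · exfalso
          have h1 : max |u y t'| |v y t'| ≤ B := by rw [← h0]; exact hinit y hy
          have h2 : B + ε ≤ φ t' := hφB t' ht'icc.1
          linarith
        · exact h0
      have hcw : ContinuousWithinAt (fun s => max |u y s| |v y s| - φ s) (Icc (0:ℝ) T) t' :=
        ((hMy y hy).sub hφcont.continuousOn) t' ht'icc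
      have hev : ∀ᶠ s in 𝓝[Icc (0:ℝ) T] t', 0 < max |u y s| |v y s| - φ s :=
        hcw.eventually (eventually_gt_nhds (sub_pos.2 hlt))
      have hsub : Ico (0:ℝ) t' ⊆ Icc (0:ℝ) T :=
        fun s hs => ⟨hs.1, le_trans hs.2.le ht'icc.2⟩
      have hne : (𝓝[Ico (0:ℝ) t'] t').NeBot := by
        rw [← mem_closure_iff_nhdsWithin_neBot, closure_Ico ht'pos.ne]
        exact ⟨ht'pos.le, le_refl t'⟩
      have hev2 : ∀ᶠ s in 𝓝[Ico (0:ℝ) t'] t', 0 < max |u y s| |v y s| - φ s :=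
        hev.filter_mono (nhdsWithin_mono _ hsub)
      obtain ⟨s, hs1, hs2⟩ := (hev2.and eventually_mem_nhdsWithin).exists
      exact absurd (hbelow s hs2 y hy) (not_le.2 (by linarith))
    have hatt' : ∀ y ∈ Icc (0:ℝ) 1, max |u y t'| |v y t'| ≤ φ t' := by
      intro y hy
      by_contra hlt
      push_neg at hlt
      exact ht'notS ⟨ht'T, y, hy, hlt⟩
    -- a touching point x' at time t'
    have hA : ∃ y ∈ Icc (0:ℝ) 1, φ t' ≤ max |u y t'| |v y t'| := by
      set Kc : Set (ℝ × ℝ) := (Icc (0:ℝ) 1 ×ˢ Icc (0:ℝ) T) ∩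
        (fun p : ℝ × ℝ => max |u p.1 p.2| |v p.1 p.2| - φ p.2) ⁻¹' (Ici 0) with hKcdef
      have hKclosed : IsClosed Kc :=
        ContinuousOn.preimage_isClosed_of_isClosed
          (hM.sub ((hφcont.comp continuous_snd).continuousOn))
          (isClosed_Icc.prod isClosed_Icc) isClosed_Ici
      have hKcomp : IsCompact Kc :=
        (isCompact_Icc.prod isCompact_Icc).of_isClosed_subset hKclosed inter_subset_left
      have hKim : IsCompact (Prod.snd '' Kc) := hKcomp.image continuous_snd
      have hSsub : S ⊆ Prod.snd '' Kc := by
        rintro s ⟨hsT, y, hy, hlt⟩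
        exact ⟨(y, s), ⟨⟨hy, hsT⟩, le_of_lt (sub_pos.2 hlt)⟩, rfl⟩
      have ht'mem : t' ∈ Prod.snd '' Kc := by
        have h1 : t' ∈ closure S := csInf_mem_closure hSne hSbdd
        have h2 : closure S ⊆ Prod.snd '' Kc :=
          closure_minimal hSsub hKim.isClosed
        exact h2 h1
      obtain ⟨⟨y, s⟩, ⟨⟨hy, _⟩, hge⟩, hsnd⟩ := ht'mem
      simp only at hsnd
      subst hsnd
      exact ⟨y, hy, by simpa [sub_nonneg] using hge⟩
    obtain ⟨x', hx', hge⟩ := hA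
    have heq : max |u x' t'| |v x' t'| = φ t' := le_antisymm (hatt' x' hx') hge
    have ht'pos : 0 < t' := by
      rcases eq_or_lt_of_le ht'T.1 with h0 | h0
      · exfalso
        have h1 : max |u x' t'| |v x' t'| ≤ B := by rw [← h0]; exact hinit x' hx'
        have h2 : B + ε ≤ φ t' := hφB t' ht'T.1
        linarith
      · exact h0
    obtain ⟨hDu, hDt, hDvx, hDvt, hequ, heqv⟩ := hder x' hx' t' ht'T
    -- derivative of φ
    have hexp : HasDerivAt (fun s : ℝ => Real.exp (k * s)) (Real.exp (k * t') * k) t' := by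
      have h1 : HasDerivAt (fun s : ℝ => k * s) k t' := by
        simpa using (hasDerivAt_id t').const_mul k
      simpa using h1.exp
    have hφd : HasDerivAt φ ((B + ε) * (Real.exp (k * t') * k)) t' := hexp.const_mul (B + ε)
    rcases max_choice |u x' t'| |v x' t'| with hcase | hcase
    · -- case: |u| touches
      have habs : |u x' t'| = φ t' := by rw [← hcase]; exact heq
      have hx'pos : 0 < x' := by
        rcases eq_or_lt_of_le hx'.1 with h0 | h0
        · exfalso
          have h1 : |u 0 t'| ≤ B := hbu t' ht'T
          have h2 : B + ε ≤ φ t' := hφB t' ht'T.1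
          rw [← h0] at habs
          linarith [habs ▸ h1]
        · exact h0
      set σ : ℝ := if 0 ≤ u x' t' then (1:ℝ) else -1 with hσdef
      have hσu : σ * u x' t' = |u x' t'| := by
        rw [hσdef]; split_ifs with h
        · rw [one_mul, abs_of_nonneg h]
        · rw [abs_of_neg (not_le.1 h)]; ring
      have hσz : ∀ z : ℝ, σ * z ≤ |z| := by
        intro z; rw [hσdef]; split_ifs
        · rw [one_mul]; exact le_abs_self z
        · rw [neg_one_mul]; exact neg_le_abs z
      -- time derivative inequality
      have hgd : HasDerivAt (fun s => σ * u x' s - φ s)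
          (σ * ut x' t' - (B + ε) * (Real.exp (k * t') * k)) t' :=
        (hDt.const_mul σ).sub hφd
      have htb : ∀ s ∈ Ico (0:ℝ) t', σ * u x' s - φ s ≤ σ * u x' t' - φ t' := by
        intro s hs
        have h1 : σ * u x' s ≤ |u x' s| := hσz _
        have h2 : |u x' s| ≤ φ s :=
          le_trans (le_max_left _ _) (hbelow s hs x' hx')
        have h3 : σ * u x' t' - φ t' = 0 := by rw [hσu, habs]; ring
        linarith
      have hdt0 : 0 ≤ σ * ut x' t' - (B + ε) * (Real.exp (k * t') * k) :=
        deriv_nonneg_left' ht'pos hgd htb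
      -- space derivative inequality
      have hhd : HasDerivAt (fun y => σ * u y t') (σ * ux x' t') x' := hDu.const_mul σ
      have hxb : ∀ y ∈ Ico (0:ℝ) x', σ * u y t' ≤ σ * u x' t' := by
        intro y hy
        have h1 : σ * u y t' ≤ |u y t'| := hσz _
        have h2 : |u y t'| ≤ φ t' :=
          le_trans (le_max_left _ _) (hatt' y ⟨hy.1, le_trans hy.2.le hx'.2⟩)
        rw [hσu, habs]
        linarith
      have hσux : 0 ≤ σ * ux x' t' := deriv_nonneg_left' hx'pos hhd hxb
      -- the source bound
      have hf : σ * fu x' (u x' t') (v x' t') ≤ lF * φ t' := by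
        have h1 : σ * fu x' (u x' t') (v x' t') ≤ |fu x' (u x' t') (v x' t')| := hσz _
        have h2 : |fu x' (u x' t') (v x' t') - fu x' 0 0| ≤
            lF * max |u x' t' - 0| |v x' t' - 0| := hLu x' hx' _ _ _ _
        rw [(hzero x' hx').1, sub_zero, sub_zero, sub_zero] at h2
        rw [heq] at h2
        linarith
      have hlupos : 0 < lu x' := lt_of_lt_of_le (by positivity) (hlu x' hx')
      have hcompute : σ * ut x' t' ≤ lF * φ t' := by
        rw [hequ]
        have h1 : σ * (-lu x' * ux x' t' + fu x' (u x' t') (v x' t')) =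
            -(lu x' * (σ * ux x' t')) + σ * fu x' (u x' t') (v x' t') := by ring
        rw [h1]
        have h2 : 0 ≤ lu x' * (σ * ux x' t') := mul_nonneg hlupos.le hσux
        linarith
      have hkφ : (B + ε) * (Real.exp (k * t') * k) = k * φ t' := by rw [hφdef]; ring
      rw [hkφ] at hdt0
      nlinarith [hφpos t']
    · -- case: |v| touches
      have habs : |v x' t'| = φ t' := by rw [← hcase]; exact heq
      have hx'lt : x' < 1 := by
        rcases eq_or_lt_of_le hx'.2 with h0 | h0
        · exfalso
          have h1 : |v 1 t'| ≤ B := hbv t' ht'T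
          have h2 : B + ε ≤ φ t' := hφB t' ht'T.1
          rw [h0] at habs
          linarith [habs ▸ h1]
        · exact h0
      set σ : ℝ := if 0 ≤ v x' t' then (1:ℝ) else -1 with hσdef
      have hσu : σ * v x' t' = |v x' t'| := by
        rw [hσdef]; split_ifs with h
        · rw [one_mul, abs_of_nonneg h]
        · rw [abs_of_neg (not_le.1 h)]; ring
      have hσz : ∀ z : ℝ, σ * z ≤ |z| := by
        intro z; rw [hσdef]; split_ifs
        · rw [one_mul]; exact le_abs_self z
        · rw [neg_one_mul]; exact neg_le_abs z
      have hgd : HasDerivAt (fun s => σ * v x' s - φ s)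
          (σ * vt x' t' - (B + ε) * (Real.exp (k * t') * k)) t' :=
        (hDvt.const_mul σ).sub hφd
      have htb : ∀ s ∈ Ico (0:ℝ) t', σ * v x' s - φ s ≤ σ * v x' t' - φ t' := by
        intro s hs
        have h1 : σ * v x' s ≤ |v x' s| := hσz _
        have h2 : |v x' s| ≤ φ s :=
          le_trans (le_max_right _ _) (hbelow s hs x' hx')
        have h3 : σ * v x' t' - φ t' = 0 := by rw [hσu, habs]; ring
        linarith
      have hdt0 : 0 ≤ σ * vt x' t' - (B + ε) * (Real.exp (k * t') * k) :=
        deriv_nonneg_left' ht'pos hgd htb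
      have hhd : HasDerivAt (fun y => σ * v y t') (σ * vx x' t') x' := hDvx.const_mul σ
      have hxb : ∀ y ∈ Ioc x' 1, σ * v y t' ≤ σ * v x' t' := by
        intro y hy
        have h1 : σ * v y t' ≤ |v y t'| := hσz _
        have h2 : |v y t'| ≤ φ t' :=
          le_trans (le_max_right _ _) (hatt' y ⟨le_trans hx'.1 hy.1.le, hy.2⟩)
        rw [hσu, habs]
        linarith
      have hσvx : σ * vx x' t' ≤ 0 := deriv_nonpos_right' hx'lt hhd hxb
      have hf : σ * fv x' (u x' t') (v x' t') ≤ lF * φ t' := by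
        have h1 : σ * fv x' (u x' t') (v x' t') ≤ |fv x' (u x' t') (v x' t')| := hσz _
        have h2 : |fv x' (u x' t') (v x' t') - fv x' 0 0| ≤
            lF * max |u x' t' - 0| |v x' t' - 0| := hLv x' hx' _ _ _ _
        rw [(hzero x' hx').2, sub_zero, sub_zero, sub_zero] at h2
        rw [heq] at h2
        linarith
      have hlvpos : 0 < lv x' := lt_of_lt_of_le (by positivity) (hlv x' hx')
      have hcompute : σ * vt x' t' ≤ lF * φ t' := by
        rw [heqv]
        have h1 : σ * (lv x' * vx x' t' + fv x' (u x' t') (v x' t')) =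
            lv x' * (σ * vx x' t') + σ * fv x' (u x' t') (v x' t') := by ring
        rw [h1]
        have h2 : lv x' * (σ * vx x' t') ≤ 0 := mul_nonpos_of_nonneg_of_nonpos hlvpos.le hσvx
        linarith
      have hkφ : (B + ε) * (Real.exp (k * t') * k) = k * φ t' := by rw [hφdef]; ring
      rw [hkφ] at hdt0
      nlinarith [hφpos t']
  -- conclude by letting ε → 0
  have hEpos : 0 < Real.exp (k * T) := Real.exp_pos _
  refine le_of_forall_pos_le_add (fun δ hδ => ?_)
  have hε : 0 < δ / Real.exp (k * T) := by positivity
  have h1 := key _ hε x hx t ht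
  have h2 : (B + δ / Real.exp (k * T)) * Real.exp (k * t) ≤
      (B + δ / Real.exp (k * T)) * Real.exp (k * T) :=
    mul_le_mul_of_nonneg_left
      (Real.exp_le_exp.2 (mul_le_mul_of_nonneg_left ht.2 hkpos.le)) (by positivity)
  have h3 : (B + δ / Real.exp (k * T)) * Real.exp (k * T) = Real.exp (k * T) * B + δ := by
    field_simp
  linarith
end
end

section
/- Let (u, v, X) be a classical solution on [0,1] × [0,∞) of the semilinear system with the ODE coupling at x = 0, let K : ℝⁿ × ℝ → ℝ be continuous, and fix t ≥ 0. Let φ : [0,1] → ℝ be the solution of the characteristic ODE φ′(x) = −f^v(x, u(x, τ^v(t;x)), φ(x)) / λ^v(x) with initial value φ(0) = K(X(τ^v(t;0)), τ^v(t;0)). If the boundary input satisfies v(1, t) = φ(1) (note τ^v(t;1) = t), then v(0, τ^v(t;0)) = K(X(τ^v(t;0)), τ^v(t;0)); that is, the control value constructed by feeding the virtual input through the inverted characteristic dynamics makes the boundary value of v at x = 0 attain the prescribed virtual input. -/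
open Set MeasureTheory intervalIntegral Filter

noncomputable section

/-- Continuity and global Lipschitz assumptions (in `(X,v)`, uniformly in `t`)
on the functions `f0, g0` defining the ODE coupling at `x = 0`.
The norm on `Fin n → ℝ` is the maximum norm. -/
def CouplingData {n : ℕ} (f0 : (Fin n → ℝ) → ℝ → ℝ → (Fin n → ℝ))
    (g0 : (Fin n → ℝ) → ℝ → ℝ → ℝ) (lfX lfv lgX lgv : ℝ) : Prop :=
  Continuous (fun p : (Fin n → ℝ) × ℝ × ℝ => f0 p.1 p.2.1 p.2.2) ∧
  Continuous (fun p : (Fin n → ℝ) × ℝ × ℝ => g0 p.1 p.2.1 p.2.2) ∧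
  (∀ X Y : Fin n → ℝ, ∀ a b t : ℝ,
    ‖f0 X a t - f0 Y b t‖ ≤ lfX * ‖X - Y‖ + lfv * |a - b| ∧
    |g0 X a t - g0 Y b t| ≤ lgX * ‖X - Y‖ + lgv * |a - b|)

/-- correctness of Step 3 of the control construction.  Let
`(u,v,X)` solve the semilinear system with ODE coupling at `x = 0` on
`[0,1] × [0,∞)`, fix `t ≥ 0` and set `τ^v(t;x) = t + ∫_x^1 dξ/λ^v(ξ)` (so
`τ^v(t;1) = t`).  If `φ` solves the characteristic ODE
`φ'(x) = -f^v(x, u(x,τ^v(t;x)), φ(x))/λ^v(x)` on `[0,1]` with initial value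
`φ(0) = K(X(τ^v(t;0)), τ^v(t;0))`, and the boundary input satisfies
`v(1,t) = φ(1)`, then `v(0, τ^v(t;0)) = K(X(τ^v(t;0)), τ^v(t;0))`. -/
theorem statement14 {n : ℕ}
    (lu lv : ℝ → ℝ) (fu fv : ℝ → ℝ → ℝ → ℝ) (l lF : ℝ)
    (f0 : (Fin n → ℝ) → ℝ → ℝ → (Fin n → ℝ)) (g0 : (Fin n → ℝ) → ℝ → ℝ → ℝ)
    (lfX lfv lgX lgv : ℝ)
    (K : (Fin n → ℝ) → ℝ → ℝ)
    (hdata : SemilinearData lu lv fu fv l lF)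
    (hcpl : CouplingData f0 g0 lfX lfv lgX lgv)
    (hK_cont : Continuous (fun p : (Fin n → ℝ) × ℝ => K p.1 p.2))
    (u v ux ut vx vt : ℝ → ℝ → ℝ) (X : ℝ → Fin n → ℝ)
    (hsol : IsSemilinearSolution lu lv fu fv (Ici 0) u v ux ut vx vt)
    (hode : ∀ t ∈ Ici (0:ℝ),
      HasDerivAt X (f0 (X t) (v 0 t) t) t ∧ u 0 t = g0 (X t) (v 0 t) t)
    (t : ℝ) (ht : 0 ≤ t)
    (φ : ℝ → ℝ)
    (hφ : ∀ x ∈ Icc (0:ℝ) 1,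
      HasDerivAt φ
        (-(fv x (u x (t + ∫ ξ in x..(1:ℝ), (lv ξ)⁻¹)) (φ x)) / lv x) x)
    (hφ0 : φ 0 = K (X (t + ∫ ξ in (0:ℝ)..1, (lv ξ)⁻¹))
                   (t + ∫ ξ in (0:ℝ)..1, (lv ξ)⁻¹))
    (hU : v 1 t = φ 1) :
    v 0 (t + ∫ ξ in (0:ℝ)..1, (lv ξ)⁻¹) =
      K (X (t + ∫ ξ in (0:ℝ)..1, (lv ξ)⁻¹))
        (t + ∫ ξ in (0:ℝ)..1, (lv ξ)⁻¹) := by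
    classical
  obtain ⟨hl, hluc, hlvc, hlub, hlvb, hfuc, hfvc, hfuL, hfvL⟩ := hdata
  obtain ⟨hpde, hux, hut, hvx, hvt⟩ := hsol
  set τ : ℝ → ℝ := fun x => t + ∫ ξ in x..(1:ℝ), (lv ξ)⁻¹ with hτdef
  have h01 : (0:ℝ) ∈ Icc (0:ℝ) 1 := left_mem_Icc.mpr zero_le_one
  have h11 : (1:ℝ) ∈ Icc (0:ℝ) 1 := right_mem_Icc.mpr zero_le_one
  have hlvpos : ∀ x ∈ Icc (0:ℝ) 1, 0 < lv x := fun x hx =>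
    lt_of_lt_of_le (by positivity) (hlvb x hx)
  have hlvne : ∀ x ∈ Icc (0:ℝ) 1, lv x ≠ 0 := fun x hx => (hlvpos x hx).ne'
  have hinvnn : ∀ x ∈ Icc (0:ℝ) 1, 0 ≤ (lv x)⁻¹ := fun x hx => (inv_pos.mpr (hlvpos x hx)).le
  have hinvle : ∀ x ∈ Icc (0:ℝ) 1, (lv x)⁻¹ ≤ l := by
    intro x hx
    rw [inv_le_comm₀ (hlvpos x hx) hl, ← one_div]
    exact hlvb x hx
  have hcontinv : ContinuousOn (fun ξ => (lv ξ)⁻¹) (Icc (0:ℝ) 1) := hlvc.inv₀ hlvne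
  have hsubIcc : ∀ {x y : ℝ}, x ∈ Icc (0:ℝ) 1 → y ∈ Icc (0:ℝ) 1 → uIcc x y ⊆ Icc (0:ℝ) 1 :=
    fun hx hy => Icc_subset_Icc (le_inf hx.1 hy.1) (sup_le hx.2 hy.2)
  have hIntOn : ∀ x ∈ Icc (0:ℝ) 1, ∀ y ∈ Icc (0:ℝ) 1,
      IntervalIntegrable (fun ξ => (lv ξ)⁻¹) volume x y :=
    fun x hx y hy => (hcontinv.mono (hsubIcc hx hy)).intervalIntegrable
  have hτsub : ∀ x ∈ Icc (0:ℝ) 1, ∀ y ∈ Icc (0:ℝ) 1,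
      τ y - τ x = ∫ ξ in y..x, (lv ξ)⁻¹ := by
    intro x hx y hy
    have h1 : (∫ ξ in y..(1:ℝ), (lv ξ)⁻¹) = -∫ ξ in (1:ℝ)..y, (lv ξ)⁻¹ :=
      (intervalIntegral.integral_symm _ _)
    have h2 : (∫ ξ in x..(1:ℝ), (lv ξ)⁻¹) = -∫ ξ in (1:ℝ)..x, (lv ξ)⁻¹ :=
      (intervalIntegral.integral_symm _ _)
    have h3 := intervalIntegral.integral_interval_sub_left
      (hIntOn 1 h11 x hx) (hIntOn 1 h11 y hy)
    simp only [hτdef]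
    rw [add_sub_add_left_eq_sub, h1, h2]
    linarith [h3]
  have hτlip : ∀ x ∈ Icc (0:ℝ) 1, ∀ y ∈ Icc (0:ℝ) 1, |τ y - τ x| ≤ l * |y - x| := by
    intro x hx y hy
    rw [hτsub x hx y hy]
    have hbnd : ∀ ξ ∈ uIoc y x, ‖(lv ξ)⁻¹‖ ≤ l := by
      intro ξ hξ
      have hξ' : ξ ∈ Icc (0:ℝ) 1 := hsubIcc hy hx (Ioc_subset_Icc_self hξ)
      rw [Real.norm_eq_abs, abs_of_nonneg (hinvnn ξ hξ')]
      exact hinvle ξ hξ'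
    have := intervalIntegral.norm_integral_le_of_norm_le_const hbnd
    simpa [Real.norm_eq_abs, abs_sub_comm x y] using this
  have hτt : ∀ x ∈ Icc (0:ℝ) 1, t ≤ τ x := by
    intro x hx
    have : 0 ≤ ∫ ξ in x..(1:ℝ), (lv ξ)⁻¹ :=
      intervalIntegral.integral_nonneg hx.2
        (fun ξ hξ => hinvnn ξ ⟨le_trans hx.1 hξ.1, hξ.2⟩)
    simp only [hτdef]; linarith
  have hτmem : ∀ x ∈ Icc (0:ℝ) 1, τ x ∈ Ici (0:ℝ) := fun x hx => le_trans ht (hτt x hx)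
  have hτderiv : ∀ x ∈ Icc (0:ℝ) 1, HasDerivWithinAt τ (-(lv x)⁻¹) (Icc (0:ℝ) 1) x := by
    intro x hx
    haveI : Fact (x ∈ Icc (0:ℝ) 1) := ⟨hx⟩
    have h := intervalIntegral.integral_hasDerivWithinAt_left
      (hIntOn x hx 1 h11)
      (hcontinv.stronglyMeasurableAtFilter_nhdsWithin measurableSet_Icc x)
      (hcontinv x hx)
      (s := Icc (0:ℝ) 1) (t := Icc (0:ℝ) 1)
    have h2 := (hasDerivWithinAt_const x (Icc (0:ℝ) 1) t).add h
    simp only [zero_add] at h2; exact h2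
  set ψ : ℝ → ℝ := fun y => v y (τ y) with hψdef
  -- ψ satisfies the same characteristic ODE
  have hψd : ∀ x ∈ Icc (0:ℝ) 1,
      HasDerivWithinAt ψ (-(fv x (u x (τ x)) (v x (τ x))) / lv x) (Icc (0:ℝ) 1) x := by
    intro x hx
    set a := vx x (τ x) with ha
    set b := vt x (τ x) with hb
    have hpdeq := (hpde x hx (τ x) (hτmem x hx)).2.2.2.2.2
    have hDeq : -(fv x (u x (τ x)) (v x (τ x))) / lv x = a + b * (-(lv x)⁻¹) := by
      have hne := hlvne x hx
      have hfveq : fv x (u x (τ x)) (v x (τ x)) = b - lv x * a := by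
        rw [hb, ha]; linarith
      rw [hfveq]
      field_simp
      ring
    rw [hDeq]
    have h1 : HasDerivWithinAt (fun y => v y (τ x)) a (Icc (0:ℝ) 1) x :=
      ((hpde x hx (τ x) (hτmem x hx)).2.2.1).hasDerivWithinAt
    have h2 : HasDerivWithinAt (fun y => b * τ y - b * τ x) (b * (-(lv x)⁻¹)) (Icc (0:ℝ) 1) x :=
      ((hτderiv x hx).const_mul b).sub_const (b * τ x)
    have h3 : HasDerivWithinAt
        (fun y => v y (τ y) - v y (τ x) - (τ y - τ x) * b) 0 (Icc (0:ℝ) 1) x := by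
      rw [hasDerivWithinAt_iff_isLittleO]
      have hsimp : (fun y => (v y (τ y) - v y (τ x) - (τ y - τ x) * b) -
          (v x (τ x) - v x (τ x) - (τ x - τ x) * b) - (y - x) • (0:ℝ)) =
          fun y => v y (τ y) - v y (τ x) - (τ y - τ x) * b := by
        funext y; simp only [smul_eq_mul, mul_zero]; ring
      rw [hsimp, Asymptotics.isLittleO_iff]
      intro c hc
      have hcl : 0 < c / l := div_pos hc hl
      obtain ⟨δ, hδ, hδball⟩ := Metric.continuousWithinAt_iff.mp
        (hvt (x, τ x) ⟨hx, hτmem x hx⟩) (c / l) hcl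
      have hev : ∀ᶠ y in nhdsWithin x (Icc (0:ℝ) 1), dist y x < δ / (l + 1) :=
        Filter.Eventually.filter_mono nhdsWithin_le_nhds
          (Metric.eventually_nhds_iff.mpr ⟨δ / (l + 1), by positivity, fun _ hy => hy⟩)
      filter_upwards [hev, eventually_mem_nhdsWithin] with y hyd hy1
      rw [Real.dist_eq] at hyd
      have hτd : |τ y - τ x| ≤ l * |y - x| := hτlip x hx y hy1
      have hτyx : |τ y - τ x| < δ := by
        calc |τ y - τ x| ≤ l * |y - x| := hτd
          _ < l * (δ / (l + 1)) := by
              apply mul_lt_mul_of_pos_left _ hl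
              exact hyd
          _ < δ := by
              rw [mul_div_assoc']
              rw [div_lt_iff₀ (by positivity)]
              nlinarith
      have hseg : ∀ s ∈ uIcc (τ x) (τ y),
          |vt y s - b| ≤ c / l ∧ s ∈ Ici (0:ℝ) := by
        intro s hs
        have hsabs : |s - τ x| ≤ |τ y - τ x| := by
          rcases Set.mem_uIcc.mp hs with ⟨hs1, hs2⟩ | ⟨hs1, hs2⟩ <;>
            rw [abs_le] <;>
            constructor <;>
            linarith [le_abs_self (τ y - τ x), neg_abs_le (τ y - τ x)]
        have hs0 : s ∈ Ici (0:ℝ) := by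
          rcases Set.mem_uIcc.mp hs with ⟨hs1, hs2⟩ | ⟨hs1, hs2⟩ <;>
            [exact le_trans (hτmem x hx) hs1; exact le_trans (hτmem y hy1) hs1]
        refine ⟨?_, hs0⟩
        have hdist : dist (y, s) (x, τ x) < δ := by
          rw [Prod.dist_eq]
          apply max_lt
          · rw [Real.dist_eq]
            calc |y - x| < δ / (l + 1) := hyd
              _ ≤ δ := by
                  rw [div_le_iff₀ (by positivity)]
                  nlinarith
          · rw [Real.dist_eq]
            exact lt_of_le_of_lt (le_trans hsabs (le_of_eq rfl)) hτyx
        have := hδball ⟨hy1, hs0⟩ hdist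
        rw [Real.dist_eq] at this
        exact this.le
      have hcontvty : ContinuousOn (fun s => vt y s) (uIcc (τ x) (τ y)) := by
        have hmap : MapsTo (fun s : ℝ => ((y : ℝ), s)) (uIcc (τ x) (τ y))
            (Icc (0:ℝ) 1 ×ˢ Ici 0) := fun s hs => ⟨hy1, (hseg s hs).2⟩
        exact hvt.comp ((continuous_const.prodMk continuous_id).continuousOn) hmap
      have hint1 : IntervalIntegrable (fun s => vt y s) volume (τ x) (τ y) :=
        hcontvty.intervalIntegrable
      have heq : v y (τ y) - v y (τ x) = ∫ s in (τ x)..(τ y), vt y s :=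
        (intervalIntegral.integral_eq_sub_of_hasDerivAt
          (fun s hs => (hpde y hy1 s (hseg s hs).2).2.2.2.1) hint1).symm
      have hconst : (τ y - τ x) * b = ∫ _ in (τ x)..(τ y), b := by
        rw [intervalIntegral.integral_const, smul_eq_mul]
      rw [heq, hconst, ← intervalIntegral.integral_sub hint1 intervalIntegrable_const]
      calc ‖∫ s in (τ x)..(τ y), (vt y s - b)‖
          ≤ c / l * |τ y - τ x| :=
            intervalIntegral.norm_integral_le_of_norm_le_const (fun s hs => by
              rw [Real.norm_eq_abs]
              exact (hseg s (uIoc_subset_uIcc hs)).1)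
        _ ≤ c / l * (l * |y - x|) := by
            apply mul_le_mul_of_nonneg_left hτd hcl.le
        _ = c * |y - x| := by field_simp
        _ = c * ‖y - x‖ := by rw [Real.norm_eq_abs]
    have hsum := (h1.add h2).add h3
    have hfun : (((fun y => v y (τ x)) + fun y => b * τ y - b * τ x) + fun y => v y (τ y) - v y (τ x) - (τ y - τ x) * b)
        = ψ := by
      funext y
      show v y (τ x) + (b * τ y - b * τ x) + (v y (τ y) - v y (τ x) - (τ y - τ x) * b) = v y (τ y)
      ring
    rw [hfun] at hsum
    rw [add_zero] at hsum
    exact hsum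
  -- Lipschitz data for the uniqueness theorem
  have hlF : 0 ≤ lF := by
    have h := hfvL 0 h01 0 0 0 1
    simp only [sub_zero, abs_zero, sub_self] at h
    have h1 : max (0:ℝ) |(0:ℝ) - 1| = 1 := by norm_num
    rw [h1, mul_one] at h
    exact le_trans (abs_nonneg _) h
  set Kc : NNReal := ⟨l * lF, by positivity⟩ with hKc
  set V : ℝ → ℝ → ℝ := fun x z =>
    if x ∈ Icc (0:ℝ) 1 then -(fv x (u x (τ x)) z) / lv x else 0 with hVdef
  have hVlip : ∀ x, LipschitzOnWith Kc (V x) univ := by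
    intro x
    apply LipschitzOnWith.of_dist_le_mul
    intro z _ z' _
    by_cases hx : x ∈ Icc (0:ℝ) 1
    · simp only [hVdef, if_pos hx, Real.dist_eq]
      have hrw : -(fv x (u x (τ x)) z) / lv x - -(fv x (u x (τ x)) z') / lv x
          = (fv x (u x (τ x)) z' - fv x (u x (τ x)) z) * (lv x)⁻¹ := by
        field_simp
        ring
      rw [hrw, abs_mul, abs_of_nonneg (hinvnn x hx)]
      have h1 : |fv x (u x (τ x)) z' - fv x (u x (τ x)) z| ≤ lF * |z - z'| := by
        have := hfvL x hx (u x (τ x)) z' (u x (τ x)) z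
        simpa [abs_sub_comm z z'] using this
      calc |fv x (u x (τ x)) z' - fv x (u x (τ x)) z| * (lv x)⁻¹
          ≤ (lF * |z - z'|) * l :=
            mul_le_mul h1 (hinvle x hx) (hinvnn x hx) (by positivity)
        _ = (Kc : ℝ) * |z - z'| := by
            show lF * |z - z'| * l = (l * lF) * |z - z'|; ring
    · simp only [hVdef, if_neg hx, dist_self]
      positivity
  -- endpoint equality at x = 1
  have hτ1 : τ 1 = t := by simp [hτdef]
  have hend : φ 1 = ψ 1 := by
    simp only [hψdef, hτ1]
    exact hU.symm
  -- uniqueness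
  have hφcont : ContinuousOn φ (Icc (0:ℝ) 1) :=
    fun x hx => ((hφ x hx).continuousAt).continuousWithinAt
  have hψcont : ContinuousOn ψ (Icc (0:ℝ) 1) :=
    fun x hx => (hψd x hx).continuousWithinAt
  have hmemIic : ∀ x ∈ Ioc (0:ℝ) 1, Icc (0:ℝ) 1 ∈ nhdsWithin x (Iic x) := by
    intro x hx
    apply mem_nhdsWithin.mpr
    exact ⟨Ioi 0, isOpen_Ioi, hx.1, fun y hy => ⟨le_of_lt hy.1, le_trans hy.2 hx.2⟩⟩
  have hφ' : ∀ x ∈ Ioc (0:ℝ) 1, HasDerivWithinAt φ (V x (φ x)) (Iic x) x := by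
    intro x hx
    rw [hVdef]
    simp only [if_pos (Ioc_subset_Icc_self hx)]
    exact (hφ x (Ioc_subset_Icc_self hx)).hasDerivWithinAt
  have hψ' : ∀ x ∈ Ioc (0:ℝ) 1, HasDerivWithinAt ψ (V x (ψ x)) (Iic x) x := by
    intro x hx
    have h := (hψd x (Ioc_subset_Icc_self hx)).mono_of_mem_nhdsWithin (hmemIic x hx)
    rw [hVdef]
    simp only [if_pos (Ioc_subset_Icc_self hx)]
    exact h
  have huniq : EqOn φ ψ (Icc (0:ℝ) 1) :=
    ODE_solution_unique_of_mem_Icc_left (v := V) (s := fun _ => univ) (fun x _ => hVlip x)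
      hφcont hφ' (fun _ _ => mem_univ _) hψcont hψ' (fun _ _ => mem_univ _) hend
  have h0 := huniq h01
  rw [hφ0] at h0
  exact h0.symm
end
end
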